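/- arXiv:math/0605429 — 3 statements merged into one kernel-verified Lean document; each statement's English description precedes it below -/
import Mathlib

section
/- Let A be a commutative monoid and D_k = C_{k-1} ∪ {0}. There is a bijection between the set of monoid homomorphisms Hom(A, D_k) and the disjoint union, over prime ideals 𝔭 of A, of the sets Hom(A \ 𝔭, C_{k-1}) of monoid homomorphisms from the submonoid A \ 𝔭 to the group C_{k-1}. -/
/-- A prime ideal of a commutative monoid: an ideal whose complement is a submonoid. -/
def IsPrimeIdeal {A : Type*} [CommMonoid A] (p : Set A) : Prop :=
  (∀ a x, x ∈ p → a * x ∈ p) ∧ (1 ∉ p) ∧ (∀ x y, x ∉ p → y ∉ p → x * y ∉ p)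

/-- The complement submonoid `S_𝔭 = A \ 𝔭` of a prime ideal. -/
def primeCompl {A : Type*} [CommMonoid A] (p : Set A) (hp : IsPrimeIdeal p) :
    Submonoid A where
  carrier := pᶜ
  one_mem' := hp.2.1
  mul_mem' := fun {x y} hx hy => hp.2.2 x y hx hy

section Aux

variable {A : Type*} [CommMonoid A] {M : Type*} [CommGroup M]

attribute [local instance] Classical.propDecidable

lemma sigma_ext' {σ τ : (p : {p : Set A // IsPrimeIdeal p}) × (primeCompl p.1 p.2 →* M)}
    (h1 : σ.1.1 = τ.1.1)
    (h2 : ∀ a (ha : a ∈ σ.1.1ᶜ) (hb : a ∈ τ.1.1ᶜ), σ.2 ⟨a, ha⟩ = τ.2 ⟨a, hb⟩) : σ = τ := by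
  obtain ⟨⟨p, hp⟩, f⟩ := σ
  obtain ⟨⟨q, hq⟩, g⟩ := τ
  simp only at h1
  subst h1
  have : f = g := MonoidHom.ext fun ⟨a, ha⟩ => h2 a ha ha
  subst this
  rfl

noncomputable def Fwd (φ : A →* WithZero M) :
    (p : {p : Set A // IsPrimeIdeal p}) × (primeCompl p.1 p.2 →* M) :=
  ⟨⟨φ ⁻¹' {0},
    ⟨fun a x hx => by
        simp only [Set.mem_preimage, Set.mem_singleton_iff] at hx ⊢
        rw [map_mul, hx, mul_zero],
      by simp only [Set.mem_preimage, Set.mem_singleton_iff, map_one]; exact one_ne_zero,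
      fun x y hx hy => by
        simp only [Set.mem_preimage, Set.mem_singleton_iff, map_mul] at hx hy ⊢
        exact mul_ne_zero hx hy⟩⟩,
   { toFun := fun s => WithZero.unzero (show φ s.1 ≠ 0 from s.2)
     map_one' := by
       rw [← WithZero.coe_inj, WithZero.coe_unzero, WithZero.coe_one]
       exact map_one φ
     map_mul' := fun s t => by
       rw [← WithZero.coe_inj, WithZero.coe_unzero, WithZero.coe_mul,
         WithZero.coe_unzero, WithZero.coe_unzero]
       exact map_mul φ s.1 t.1 }⟩

noncomputable def Bwd (x : (p : {p : Set A // IsPrimeIdeal p}) × (primeCompl p.1 p.2 →* M)) :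
    A →* WithZero M where
  toFun a := if h : a ∈ x.1.1 then 0 else (x.2 ⟨a, h⟩ : WithZero M)
  map_one' := by
    show (if h : (1:A) ∈ x.1.1 then (0 : WithZero M) else (x.2 ⟨1, h⟩ : WithZero M)) = 1
    rw [dif_neg x.1.2.2.1]
    have : (⟨1, x.1.2.2.1⟩ : primeCompl x.1.1 x.1.2) = 1 := rfl
    rw [this, map_one, WithZero.coe_one]
  map_mul' := fun a b => by
    obtain ⟨⟨p, hp⟩, ψ⟩ := x
    by_cases ha : a ∈ p
    · have hab : a * b ∈ p := by rw [mul_comm]; exact hp.1 b a ha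
      simp only [dif_pos ha, dif_pos hab, zero_mul]
    · by_cases hb : b ∈ p
      · have hab : a * b ∈ p := hp.1 a b hb
        simp only [dif_pos hb, dif_pos hab, mul_zero]
      · have hab : a * b ∉ p := hp.2.2 a b ha hb
        simp only [dif_neg ha, dif_neg hb, dif_neg hab]
        have : (⟨a * b, hab⟩ : primeCompl p hp) = ⟨a, ha⟩ * ⟨b, hb⟩ := rfl
        rw [this, map_mul, WithZero.coe_mul]

lemma bwd_fwd (φ : A →* WithZero M) : Bwd (Fwd φ) = φ := by
  ext a
  show (if h : a ∈ φ ⁻¹' {0} then (0 : WithZero M)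
      else ((Fwd φ).2 ⟨a, h⟩ : WithZero M)) = φ a
  by_cases h : a ∈ φ ⁻¹' {0}
  · rw [dif_pos h]
    exact (Set.mem_singleton_iff.mp h).symm
  · rw [dif_neg h]
    exact WithZero.coe_unzero _

lemma fwd_bwd (x : (p : {p : Set A // IsPrimeIdeal p}) × (primeCompl p.1 p.2 →* M)) :
    Fwd (Bwd x) = x := by
  have h1 : (Fwd (Bwd x)).1.1 = x.1.1 := by
    ext a
    show Bwd x a = 0 ↔ a ∈ x.1.1
    constructor
    · intro h
      by_contra ha
      have : Bwd x a = (x.2 ⟨a, ha⟩ : WithZero M) := dif_neg ha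
      rw [this] at h
      exact WithZero.coe_ne_zero h
    · intro h
      exact dif_pos h
  refine sigma_ext' h1 fun a ha hb => ?_
  rw [← WithZero.coe_inj]
  have h2 : (Fwd (Bwd x)).2 ⟨a, ha⟩ = WithZero.unzero (show Bwd x a ≠ 0 from ha) := rfl
  rw [h2, WithZero.coe_unzero]
  exact dif_neg hb

end Aux

/-- Monoid homomorphisms `A → D_k = C_{k-1} ∪ {0}` are in bijection with pairs of a
prime ideal `𝔭` of `A` and a homomorphism `A \ 𝔭 → C_{k-1}`; the bijection sends `φ`
to its restriction to the complement of `φ⁻¹{0}`. -/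
theorem stmt_6 (A : Type*) [CommMonoid A] (k : ℕ) (hk : 2 ≤ k) :
    ∃ e : (A →* WithZero (Multiplicative (ZMod (k - 1)))) ≃
      ((p : {p : Set A // IsPrimeIdeal p}) ×
        (primeCompl p.1 p.2 →* Multiplicative (ZMod (k - 1)))),
      ∀ φ, (e φ).1.1 = φ ⁻¹' {0} ∧
        ∀ s : primeCompl (e φ).1.1 (e φ).1.2,
          ((e φ).2 s : WithZero (Multiplicative (ZMod (k - 1)))) = φ s := by
  refine ⟨⟨Fwd, Bwd, bwd_fwd, fwd_bwd⟩, fun φ => ⟨rfl, fun s => WithZero.coe_unzero _⟩⟩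
end

section
/- Let A be a finitely generated commutative monoid. Then the set of prime ideals of A (the spectrum spec(A)) is finite. -/
/-!
A prime ideal `p` satisfies `1 ∉ p` and `x * y ∈ p ↔ x ∈ p ∨ y ∈ p`, so the elements on which
two prime ideals agree form a submonoid. Hence a prime ideal is determined by the generators it
contains, and a monoid with a finite generating set `S` has at most `2 ^ |S|` prime ideals.
-/

namespace MonoidPrimeIdeal

variable {A : Type*} [CommMonoid A]

def IsPrime (p : Set A) : Prop :=
  (∀ a x, x ∈ p → a * x ∈ p) ∧ (1 ∉ p) ∧ (∀ x y, x ∉ p → y ∉ p → x * y ∉ p)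

theorem IsPrime.mul_mem_iff {p : Set A} (hp : IsPrime p) {x y : A} :
    x * y ∈ p ↔ x ∈ p ∨ y ∈ p := by
  obtain ⟨hideal, -, hcompl⟩ := hp
  refine ⟨fun hxy => ?_, ?_⟩
  · by_contra! h
    exact hcompl x y h.1 h.2 hxy
  · rintro (hx | hy)
    · rw [mul_comm]
      exact hideal y x hx
    · exact hideal x y hy

def agreeSubmonoid {p q : Set A} (hp : IsPrime p) (hq : IsPrime q) : Submonoid A where
  carrier := {x | x ∈ p ↔ x ∈ q}
  one_mem' := iff_of_false hp.2.1 hq.2.1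
  mul_mem' {x y} (hx : x ∈ p ↔ x ∈ q) (hy : y ∈ p ↔ y ∈ q) :=
    show x * y ∈ p ↔ x * y ∈ q by rw [hp.mul_mem_iff, hq.mul_mem_iff, hx, hy]

theorem IsPrime.eq_of_inter_eq {S : Set A} (hS : Submonoid.closure S = ⊤) {p q : Set A}
    (hp : IsPrime p) (hq : IsPrime q) (h : p ∩ S = q ∩ S) : p = q := by
  have hSle : S ⊆ agreeSubmonoid hp hq := fun s hs => by
    simpa [agreeSubmonoid, hs] using congrArg (s ∈ ·) h
  have htop : agreeSubmonoid hp hq = ⊤ := top_unique (hS ▸ Submonoid.closure_le.mpr hSle)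
  ext x
  exact (htop ▸ Submonoid.mem_top x : x ∈ agreeSubmonoid hp hq)

theorem finite_setOf_isPrime [Monoid.FG A] : {p : Set A | IsPrime p}.Finite := by
  obtain ⟨S, hS⟩ := Monoid.fg_def.mp ‹Monoid.FG A›
  have hinj : Set.InjOn (· ∩ (S : Set A)) {p | IsPrime p} :=
    fun p hp q hq h => hp.eq_of_inter_eq hS hq h
  refine Set.Finite.of_finite_image (S.finite_toSet.finite_subsets.subset ?_) hinj
  rintro _ ⟨p, -, rfl⟩
  exact Set.inter_subset_right

end MonoidPrimeIdeal

/-- The set of prime ideals of a finitely generated commutative monoid is finite. -/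
theorem stmt_13 (A : Type*) [CommMonoid A] [Monoid.FG A] :
    {p : Set A | (∀ a x, x ∈ p → a * x ∈ p) ∧ (1 ∉ p) ∧
      (∀ x y, x ∉ p → y ∉ p → x * y ∉ p)}.Finite :=
  MonoidPrimeIdeal.finite_setOf_isPrime
end

section
/- Let 𝔭 be a prime ideal of a commutative monoid A and S_𝔭 = A \ 𝔭. Then the group completion Quot(S_𝔭) is isomorphic to the group of units of the localization A_𝔭 = S_𝔭⁻¹ A. -/
/-- For a prime ideal `𝔭` of a commutative monoid `A` with complement submonoid
`S = A \ 𝔭`, the group completion `Quot(S)` is isomorphic to the group of units of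
the localization `A_𝔭 = S⁻¹A`. -/
theorem stmt_16 (A : Type*) [CommMonoid A] (p : Set A)
    (h_ideal : ∀ a x, x ∈ p → a * x ∈ p)
    (S : Submonoid A) (hS : (S : Set A) = pᶜ) :
    Nonempty ((Localization (⊤ : Submonoid S)) ≃* (Localization S)ˣ) := by
  -- S is "prime": x * y ∈ S → x ∈ S
  have hmem : ∀ x : A, x ∈ S ↔ x ∉ p := by
    intro x; rw [← SetLike.mem_coe, hS]; rfl
  have hprime : ∀ x y : A, x * y ∈ S → x ∈ S := by
    intro x y hxy
    rw [hmem] at hxy ⊢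
    intro hx
    exact hxy (by rw [mul_comm]; exact h_ideal y x hx)
  -- the map S →* (Localization S)ˣ
  let f : S →* (Localization S)ˣ :=
  { toFun := fun s => ⟨Localization.mk (s : A) 1, Localization.mk 1 s,
      by rw [Localization.mk_mul, one_mul, mul_one]; exact Localization.mk_self s,
      by rw [Localization.mk_mul, one_mul, mul_one]; exact Localization.mk_self s⟩
    map_one' := by ext; simp [Localization.mk_one]
    map_mul' := fun a b => by
      ext
      simp [Localization.mk_mul] }
  have hg : ∀ y : (⊤ : Submonoid S), IsUnit (f y) := fun y => Group.isUnit _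
  let φ : Localization (⊤ : Submonoid S) →* (Localization S)ˣ :=
    (Localization.monoidOf (⊤ : Submonoid S)).lift hg
  have hφval : ∀ (a : S) (b : (⊤ : Submonoid S)),
      ((φ (Localization.mk a b) : (Localization S)ˣ) : Localization S)
        = Localization.mk (a : A) ((b : S)) := by
    intro a b
    have h1 : φ (Localization.mk a b) * f (b : S) = f a := by
      have key : Localization.mk a b * Localization.mk ((b : S)) 1 = Localization.mk a 1 := by
        rw [Localization.mk_mul, mul_one]
        rw [Localization.mk_eq_mk_iff, Localization.r_iff_exists]
        exact ⟨1, by simp [mul_comm]⟩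
      calc φ (Localization.mk a b) * f (b : S)
          = φ (Localization.mk a b) * φ (Localization.mk ((b : S)) 1) := by
            rw [Localization.mk_one_eq_monoidOf_mk]
            rw [Submonoid.LocalizationMap.lift_eq]
        _ = φ (Localization.mk a 1) := by rw [← map_mul, key]
        _ = f a := by
            rw [Localization.mk_one_eq_monoidOf_mk, Submonoid.LocalizationMap.lift_eq]
    have h2 : φ (Localization.mk a b) = f a * (f (b : S))⁻¹ := by
      rw [← h1]; group
    rw [h2]
    show (Localization.mk (a : A) 1 * Localization.mk 1 (b : S)) = _
    rw [Localization.mk_mul, mul_one, one_mul]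
  refine ⟨MulEquiv.ofBijective φ ⟨?_, ?_⟩⟩
  · intro x y hxy
    induction x using Localization.induction_on with | H x =>
    induction y using Localization.induction_on with | H y =>
    obtain ⟨a, b⟩ := x
    obtain ⟨c, d⟩ := y
    have hv : Localization.mk (a : A) ((b : S)) = Localization.mk (c : A) ((d : S)) := by
      rw [← hφval a b, ← hφval c d, hxy]
    rw [Localization.mk_eq_mk_iff, Localization.r_iff_exists] at hv
    obtain ⟨u, hu⟩ := hv
    rw [Localization.mk_eq_mk_iff, Localization.r_iff_exists]
    exact ⟨⟨u, trivial⟩, Subtype.ext (by push_cast; exact hu)⟩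
  · intro u
    obtain ⟨a, t, hat⟩ : ∃ a t, Localization.mk a t = (u : Localization S) :=
      Localization.induction_on (u : Localization S) fun y => ⟨y.1, y.2, rfl⟩
    obtain ⟨b, r, hbr⟩ : ∃ b r, Localization.mk b r = ((u⁻¹ : (Localization S)ˣ) : Localization S) :=
      Localization.induction_on ((u⁻¹ : (Localization S)ˣ) : Localization S) fun y => ⟨y.1, y.2, rfl⟩
    have hmul1 : Localization.mk a t * Localization.mk b r = 1 := by
      rw [hat, hbr, ← Units.val_mul, mul_inv_cancel, Units.val_one]
    rw [Localization.mk_mul, ← Localization.mk_one, Localization.mk_eq_mk_iff,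
      Localization.r_iff_exists] at hmul1
    obtain ⟨c, hc⟩ := hmul1
    simp only [one_mul, mul_one] at hc
    have haS : a ∈ S := by
      apply hprime a ((c : A) * b)
      have heq : a * ((c : A) * b) = (c : A) * ((t * r : S) : A) := by
        rw [← hc]; simp [mul_left_comm]
      rw [heq]
      exact S.mul_mem c.2 (t * r).2
    refine ⟨Localization.mk ⟨a, haS⟩ ⟨t, trivial⟩, ?_⟩
    ext
    rw [hφval]
    exact hat
end
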